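/- arXiv:1307.4114 — 3 statements merged into one kernel-verified Lean document; each statement's English description precedes it below -/
import Mathlib

section
/- The formal power series identity $\prod_{n=1}^{\infty}(1-q^n)^3 = \sum_{n\in\mathbb{Z}} (4n+1) q^{n(2n+1)}$ holds (Jacobi's identity for the cube of the Euler product). -/
/-!
Write `(q;q)_m = (1 - q) ⋯ (1 - q^m)` (`eulerProd q m`), `[n, k]_q` for the Gaussian binomial
coefficients and `T(k) = k(k+1)/2`. By the two `q`-Pascal rules, the finite triple product
`∏_{j=1}^{m} (1 - q^j z)(z - q^{j-1})` has `(-1)^{m+i} [2m, i]_q q^{T(i-m)}` as coefficient of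
`z^i`. It vanishes at `z = 1` and its `z`-derivative there is `(q;q)_m (q;q)_{m-1}`, so
`(q;q)_m (q;q)_{m-1} = ∑_i (i - m) (-1)^{m+i} [2m, i]_q q^{T(i-m)}`.

Multiply by `(q;q)_m`. Modulo `q^{min(i, 2m-i)+1}` we have
`(q;q)_m [2m, i]_q ≡ (q;q)_i [2m, i]_q = (1 - q^{2m-i+1}) ⋯ (1 - q^{2m}) ≡ 1`, and
`(q;q)_m^3 ≡ (q;q)_m^2 (q;q)_{m-1}` modulo `q^m`. Hence for `N < m` the coefficient of `q^N` in
`(q;q)_m^3` is the sum of `k (-1)^k` over the `k` with `T(k) = N`. Finally `T(k) = n(2n+1)`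
exactly for `k = 2n` and `k = -2n-1`, which together contribute `2n + (2n+1) = 4n+1`.
-/

open PowerSeries Finset
open scoped Polynomial

section

variable {R : Type*} [CommRing R] (q : R)

def qBinom : ℕ → ℕ → R
  | _, 0 => 1
  | 0, _ + 1 => 0
  | n + 1, k + 1 => q ^ (k + 1) * qBinom n (k + 1) + qBinom n k

@[simp]
lemma qBinom_zero_right (n : ℕ) : qBinom q n 0 = 1 := by
  cases n <;> rfl

@[simp]
lemma qBinom_zero_succ (k : ℕ) : qBinom q 0 (k + 1) = 0 := rfl

lemma qBinom_succ_succ (n k : ℕ) :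
    qBinom q (n + 1) (k + 1) = q ^ (k + 1) * qBinom q n (k + 1) + qBinom q n k := rfl

lemma qBinom_eq_zero_of_lt {n k : ℕ} (h : n < k) : qBinom q n k = 0 := by
  induction n generalizing k with
  | zero => obtain ⟨k, rfl⟩ := Nat.exists_eq_add_one.mpr h; rfl
  | succ n ih =>
    obtain ⟨k, rfl⟩ := Nat.exists_eq_add_one.mpr (Nat.zero_lt_of_lt h)
    rw [qBinom_succ_succ, ih (by omega), ih (by omega), mul_zero, add_zero]

/-- The truncated subtraction `n - k` is harmless: `qBinom q n k = 0` for `n < k`. -/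
lemma qBinom_succ_succ' (n k : ℕ) :
    qBinom q (n + 1) (k + 1) = qBinom q n (k + 1) + q ^ (n - k) * qBinom q n k := by
  induction n generalizing k with
  | zero => cases k <;> simp [qBinom_succ_succ]
  | succ n ih =>
    cases k with
    | zero =>
      have h := ih 0
      simp only [qBinom_succ_succ, qBinom_zero_right, Nat.sub_zero, mul_one] at h ⊢
      linear_combination q * h
    | succ k =>
      have hpow : q ^ (k + 2) * q ^ (n - (k + 1)) * qBinom q n (k + 1)
          = q ^ (n - k) * q ^ (k + 1) * qBinom q n (k + 1) := by
        rcases le_or_gt (k + 1) n with hk | hk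
        · rw [← pow_add, ← pow_add]; congr 2; omega
        · rw [qBinom_eq_zero_of_lt q hk, mul_zero, mul_zero]
      rw [qBinom_succ_succ q (n + 1) (k + 1), Nat.add_sub_add_right]
      linear_combination q ^ (k + 2) * ih (k + 1) - qBinom_succ_succ q n (k + 1) + ih k
        - q ^ (n - k) * qBinom_succ_succ q n k + hpow

lemma qBinom_two_mul_add_two (m i : ℕ) :
    qBinom q (2 * m + 2) (i + 2) = (1 + q ^ (2 * m + 1)) * qBinom q (2 * m) (i + 1)
      + q ^ (i + 2) * qBinom q (2 * m) (i + 2) + q ^ (2 * m - i) * qBinom q (2 * m) i := by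
  have hpow : q ^ (2 * m - i) * q ^ (i + 1) * qBinom q (2 * m) (i + 1)
      = q ^ (2 * m + 1) * qBinom q (2 * m) (i + 1) := by
    rcases le_or_gt i (2 * m) with hi | hi
    · rw [← pow_add]; congr 2; omega
    · rw [qBinom_eq_zero_of_lt q (by omega), mul_zero, mul_zero]
  rw [qBinom_succ_succ', qBinom_succ_succ, qBinom_succ_succ, Nat.add_sub_add_right]
  linear_combination hpow

def eulerProd (m : ℕ) : R := ∏ j ∈ range m, (1 - q ^ (j + 1))

lemma eulerProd_succ (m : ℕ) : eulerProd q (m + 1) = eulerProd q m * (1 - q ^ (m + 1)) :=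
  prod_range_succ _ m

/-- For `N < k` the factor `j = N` on the right is `1 - q ^ 0 = 0`, matching
`qBinom q N k = 0`. -/
lemma eulerProd_mul_qBinom (N k : ℕ) :
    eulerProd q k * qBinom q N k = ∏ j ∈ range k, (1 - q ^ (N - j)) := by
  induction N generalizing k with
  | zero => cases k <;> simp [eulerProd, prod_range_succ']
  | succ N ih =>
    cases k with
    | zero => simp [eulerProd]
    | succ k =>
      have hpow : q ^ (k + 1) * q ^ (N - k) * ∏ j ∈ range k, (1 - q ^ (N - j))
          = q ^ (N + 1) * ∏ j ∈ range k, (1 - q ^ (N - j)) := by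
        rcases le_or_gt k N with hk | hk
        · rw [← pow_add]; congr 2; omega
        · rw [prod_eq_zero (mem_range.2 hk) (by simp), mul_zero, mul_zero]
      have ih' := ih (k + 1)
      rw [eulerProd_succ, prod_range_succ] at ih'
      rw [qBinom_succ_succ, eulerProd_succ, prod_range_succ']
      simp only [Nat.add_sub_add_right, Nat.sub_zero]
      linear_combination q ^ (k + 1) * ih' + (1 - q ^ (k + 1)) * ih k - hpow

def triangular (k : ℤ) : ℕ := (k * (k + 1) / 2).toNat

lemma two_mul_triangular (k : ℤ) : 2 * (triangular k : ℤ) = k * (k + 1) := by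
  have hnonneg : 0 ≤ k * (k + 1) := by
    rcases le_or_gt 0 k with hk | hk <;> nlinarith
  rw [triangular, Int.toNat_of_nonneg (Int.ediv_nonneg hnonneg zero_le_two),
    Int.mul_ediv_cancel' (Int.even_mul_succ_self k).two_dvd]

lemma triangular_add_one (k : ℤ) : (triangular (k + 1) : ℤ) = triangular k + k + 1 := by
  have h := two_mul_triangular (k + 1)
  have h' := two_mul_triangular k
  have : 2 * ((triangular (k + 1) : ℤ) - triangular k - k - 1) = 0 := by
    linear_combination h - h'
  omega

lemma triangular_natCast_succ_sub (i m : ℕ) :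
    m + triangular ((i + 1 : ℕ) - (m : ℤ)) = i + 1 + triangular ((i : ℤ) - m) := by
  have h := triangular_add_one ((i : ℤ) - m)
  rw [show (i : ℤ) - m + 1 = (i + 1 : ℕ) - (m : ℤ) by push_cast; ring] at h
  omega

lemma triangular_natCast_succ_sub_succ (i m : ℕ) :
    triangular ((i + 1 : ℕ) - ((m + 1 : ℕ) : ℤ)) = triangular ((i : ℤ) - m) := by
  congr 1; push_cast; ring

lemma triangular_neg_sub_one (k : ℤ) : triangular (-k - 1) = triangular k := by
  rw [triangular, triangular]; congr 2; ring

lemma self_le_triangular (k : ℤ) : k ≤ triangular k := by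
  have h := two_mul_triangular k
  rcases le_or_gt k 0 with hk | hk
  · have : (0 : ℤ) ≤ triangular k := Int.natCast_nonneg _
    omega
  · nlinarith

lemma neg_sub_one_le_triangular (k : ℤ) : -k - 1 ≤ triangular k := by
  simpa [triangular_neg_sub_one] using self_le_triangular (-k - 1)

lemma triangular_eq_mul_iff (k n : ℤ) :
    (triangular k : ℤ) = n * (2 * n + 1) ↔ k = 2 * n ∨ k = -2 * n - 1 := by
  rw [← mul_right_inj' (two_ne_zero' ℤ), two_mul_triangular]
  constructor
  · intro h
    have hfac : (k - 2 * n) * (k + 2 * n + 1) = 0 := by linear_combination h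
    rcases mul_eq_zero.1 hfac with h | h <;> omega
  · rintro (rfl | rfl) <;> ring

lemma exists_mul_two_mul_add_one_eq_triangular (k : ℤ) :
    ∃ n : ℤ, n * (2 * n + 1) = triangular k := by
  rcases Int.even_or_odd' k with ⟨n, rfl | rfl⟩
  · exact ⟨n, ((triangular_eq_mul_iff _ n).2 (Or.inl rfl)).symm⟩
  · exact ⟨-n - 1, ((triangular_eq_mul_iff _ _).2 (Or.inr (by ring))).symm⟩

lemma mul_two_mul_add_one_injective : Function.Injective fun n : ℤ => n * (2 * n + 1) := by
  intro n n' h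
  have := (triangular_eq_mul_iff (2 * n) n').1
    (((triangular_eq_mul_iff _ n).2 (Or.inl rfl)).trans h)
  omega

noncomputable def tripleProd (m : ℕ) : R[X] :=
  ∏ j ∈ range m,
    (1 - Polynomial.C (q ^ (j + 1)) * Polynomial.X) * (Polynomial.X - Polynomial.C (q ^ j))

def tripleCoeff (m i : ℕ) : R := (-1) ^ (m + i) * qBinom q (2 * m) i * q ^ triangular (i - m)

lemma tripleProd_succ (m : ℕ) :
    tripleProd q (m + 1) = Polynomial.C (1 + q ^ (2 * m + 1)) * (tripleProd q m * Polynomial.X)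
      - Polynomial.C (q ^ m) * tripleProd q m
      - Polynomial.C (q ^ (m + 1)) * (tripleProd q m * Polynomial.X ^ 2) := by
  rw [tripleProd, prod_range_succ, ← tripleProd]
  simp only [map_add, map_one, map_pow]
  ring

lemma tripleCoeff_succ_zero (m : ℕ) : tripleCoeff q (m + 1) 0 = -(q ^ m * tripleCoeff q m 0) := by
  have h := triangular_natCast_succ_sub 0 (m + 1)
  rw [triangular_natCast_succ_sub_succ] at h
  simp only [tripleCoeff, qBinom_zero_right,
    show triangular ((0 : ℕ) - ((m + 1 : ℕ) : ℤ)) = m + triangular ((0 : ℕ) - (m : ℤ)) by omega]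
  ring

lemma tripleCoeff_succ_one (m : ℕ) :
    tripleCoeff q (m + 1) 1
      = (1 + q ^ (2 * m + 1)) * tripleCoeff q m 0 - q ^ m * tripleCoeff q m 1 := by
  have hq : q ^ m * q ^ triangular ((1 : ℕ) - (m : ℤ))
      = q * q ^ triangular ((0 : ℕ) - (m : ℤ)) := by
    rw [← pow_add, triangular_natCast_succ_sub 0 m, zero_add, pow_add, pow_one]
  simp only [tripleCoeff, triangular_natCast_succ_sub_succ 0 m]
  rw [show 2 * (m + 1) = 2 * m + 1 + 1 by ring, qBinom_succ_succ', qBinom_succ_succ]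
  simp only [Nat.sub_zero, qBinom_zero_right]
  linear_combination (-1) ^ (m + 1) * qBinom q (2 * m) 1 * hq

lemma tripleCoeff_succ_add_two (m i : ℕ) :
    tripleCoeff q (m + 1) (i + 2) = (1 + q ^ (2 * m + 1)) * tripleCoeff q m (i + 1)
      - q ^ m * tripleCoeff q m (i + 2) - q ^ (m + 1) * tripleCoeff q m i := by
  set k : ℤ := (i + 1 : ℕ) - (m : ℤ)
  have hA : q ^ m * q ^ triangular (k + 1) = q ^ (i + 2) * q ^ triangular k := by
    have := triangular_add_one k
    rw [← pow_add, ← pow_add]; congr 1; omega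
  have hB : q ^ (m + 1) * q ^ triangular (k - 1) * qBinom q (2 * m) i
      = q ^ (2 * m - i) * q ^ triangular k * qBinom q (2 * m) i := by
    rcases le_or_gt i (2 * m) with hi | hi
    · have := triangular_add_one (k - 1)
      rw [sub_add_cancel] at this
      rw [← pow_add, ← pow_add]; congr 2; omega
    · rw [qBinom_eq_zero_of_lt q hi, mul_zero, mul_zero]
  simp only [tripleCoeff, triangular_natCast_succ_sub_succ (i + 1) m]
  rw [show 2 * (m + 1) = 2 * m + 2 by ring, qBinom_two_mul_add_two,
    show ((i + 2 : ℕ) : ℤ) - m = k + 1 by simp only [k]; push_cast; ring,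
    show ((i : ℕ) : ℤ) - m = k - 1 by simp only [k]; push_cast; ring]
  linear_combination (-1) ^ (m + i) * (qBinom q (2 * m) (i + 2) * hA + hB)

lemma coeff_tripleProd (m i : ℕ) : (tripleProd q m).coeff i = tripleCoeff q m i := by
  induction m generalizing i with
  | zero => cases i <;> simp [tripleProd, tripleCoeff, triangular, Polynomial.coeff_one]
  | succ m ih =>
    rw [tripleProd_succ]
    simp only [Polynomial.coeff_sub, Polynomial.coeff_C_mul, Polynomial.coeff_mul_X_pow', ih]
    match i with
    | 0 =>
      simp only [Polynomial.coeff_mul_X_zero, if_neg (show ¬ 2 ≤ 0 by omega),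
        tripleCoeff_succ_zero]
      ring
    | 1 =>
      simp only [Polynomial.coeff_mul_X, ih, if_neg (show ¬ 2 ≤ 1 by omega), tripleCoeff_succ_one]
      ring
    | i + 2 =>
      simp only [Polynomial.coeff_mul_X, ih, if_pos (show 2 ≤ i + 2 by omega), Nat.add_sub_cancel,
        tripleCoeff_succ_add_two]

lemma tripleProd_eq_sum (m : ℕ) :
    tripleProd q m
      = ∑ i ∈ range (2 * m + 1), Polynomial.C (tripleCoeff q m i) * Polynomial.X ^ i := by
  ext n
  rw [coeff_tripleProd, Polynomial.finsetSum_coeff]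
  simp only [Polynomial.coeff_C_mul_X_pow, sum_ite_eq, mem_range]
  split_ifs with hn
  · rfl
  · rw [tripleCoeff, qBinom_eq_zero_of_lt q (by omega), mul_zero, zero_mul]

lemma eval_one_tripleProd (m : ℕ) : (tripleProd q (m + 1)).eval 1 = 0 := by
  rw [tripleProd, Polynomial.eval_prod, prod_eq_zero (mem_range.2 m.succ_pos)]
  simp

lemma eval_one_derivative_tripleProd (m : ℕ) :
    (Polynomial.derivative (tripleProd q (m + 1))).eval 1
      = eulerProd q (m + 1) * eulerProd q m := by
  rw [eulerProd, eulerProd, prod_range_succ' _ m, mul_right_comm, ← prod_mul_distrib]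
  simp [tripleProd, prod_range_succ' _ m, Polynomial.eval_prod]

lemma sum_tripleCoeff (m : ℕ) : ∑ i ∈ range (2 * (m + 1) + 1), tripleCoeff q (m + 1) i = 0 := by
  rw [← eval_one_tripleProd q m, tripleProd_eq_sum]
  simp [Polynomial.eval_finsetSum]

lemma sum_mul_tripleCoeff (m : ℕ) :
    ∑ i ∈ range (2 * (m + 1) + 1), (i : R) * tripleCoeff q (m + 1) i
      = eulerProd q (m + 1) * eulerProd q m := by
  rw [← eval_one_derivative_tripleProd, tripleProd_eq_sum]
  simp [Polynomial.derivative_X_pow, Polynomial.eval_finsetSum, mul_comm (tripleCoeff q _ _)]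

lemma sum_sub_mul_tripleCoeff (m : ℕ) :
    ∑ i ∈ range (2 * (m + 1) + 1), ((i : R) - (m + 1 : ℕ)) * tripleCoeff q (m + 1) i
      = eulerProd q (m + 1) * eulerProd q m := by
  simp only [sub_mul, sum_sub_distrib, ← mul_sum, sum_tripleCoeff, sum_mul_tripleCoeff, mul_zero,
    sub_zero]

lemma mk_prod_one_sub_pow {x : R} {c : ℕ} {s : Finset ℕ} {e : ℕ → ℕ} (h : ∀ l ∈ s, c ≤ e l) :
    Ideal.Quotient.mk (Ideal.span {x ^ c}) (∏ l ∈ s, (1 - x ^ e l)) = 1 := by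
  rw [map_prod]
  refine prod_eq_one fun l hl => ?_
  rw [map_sub, map_one, (Ideal.Quotient.eq_zero_iff_dvd _ _).2 (pow_dvd_pow x (h l hl)), sub_zero]

lemma mk_eulerProd_of_le (x : R) {a b c : ℕ} (hab : a ≤ b) (hc : c ≤ a + 1) :
    Ideal.Quotient.mk (Ideal.span {x ^ c}) (eulerProd x b)
      = Ideal.Quotient.mk (Ideal.span {x ^ c}) (eulerProd x a) := by
  obtain ⟨d, rfl⟩ := Nat.exists_eq_add_of_le hab
  rw [eulerProd, eulerProd, prod_range_add, map_mul,
    mk_prod_one_sub_pow (s := range d) (e := fun l => a + l + 1) fun l _ => by omega, mul_one]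

lemma coeff_eulerProd_mul_qBinom {m i j : ℕ} (hj : j ≤ i) (hji : j + i ≤ 2 * m) :
    coeff j (eulerProd (X : R⟦X⟧) m * qBinom X (2 * m) i) = if j = 0 then 1 else 0 := by
  have hmk : Ideal.Quotient.mk (Ideal.span {(X : R⟦X⟧) ^ (j + 1)})
      (eulerProd X m * qBinom X (2 * m) i) = Ideal.Quotient.mk _ 1 := by
    rw [map_mul, mk_eulerProd_of_le X (show j ≤ m by omega) le_rfl,
      ← mk_eulerProd_of_le X hj le_rfl, ← map_mul, eulerProd_mul_qBinom, map_one,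
      mk_prod_one_sub_pow fun l hl => by rw [mem_range] at hl; omega]
  rw [Ideal.Quotient.eq, Ideal.mem_span_singleton, X_pow_dvd_iff] at hmk
  rw [← coeff_one, ← sub_eq_zero, ← map_sub]
  exact hmk j (lt_add_one j)

lemma coeff_eulerProd_mul_tripleCoeff {N m i : ℕ} (hN : N < m) (hi : i ≤ 2 * m) :
    coeff N (eulerProd (X : R⟦X⟧) m * tripleCoeff X m i)
      = if triangular (i - m) = N then (-1) ^ (m + i) else 0 := by
  have hfactor : eulerProd (X : R⟦X⟧) m * tripleCoeff X m i = C ((-1 : R) ^ (m + i))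
      * (X ^ triangular (i - m) * (eulerProd X m * qBinom X (2 * m) i)) := by
    rw [tripleCoeff, map_pow, map_neg, map_one]; ring
  have h₁ := self_le_triangular ((i : ℤ) - m)
  have h₂ := neg_sub_one_le_triangular ((i : ℤ) - m)
  rw [hfactor, coeff_C_mul, coeff_X_pow_mul']
  split_ifs with hle heq heq
  · rw [coeff_eulerProd_mul_qBinom (by omega) (by omega), if_pos (by omega), mul_one]
  · rw [coeff_eulerProd_mul_qBinom (by omega) (by omega), if_neg (by omega), mul_zero]
  · omega
  · rw [mul_zero]

lemma coeff_eulerProd_pow_three (N : ℕ) :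
    coeff N (eulerProd (X : R⟦X⟧) (N + 1) ^ 3)
      = ∑ i ∈ range (2 * (N + 1) + 1), ((i : R) - (N + 1 : ℕ))
          * if triangular (i - (N + 1 : ℕ)) = N then (-1) ^ (N + 1 + i) else 0 := by
  have hcube : eulerProd (X : R⟦X⟧) (N + 1) ^ 3
      = eulerProd X (N + 1) * (eulerProd X (N + 1) * eulerProd X N)
        - X ^ (N + 1) * (eulerProd X (N + 1) ^ 2 * eulerProd X N) := by
    rw [eulerProd_succ]; ring
  rw [hcube, map_sub, coeff_X_pow_mul', if_neg (by omega), sub_zero,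
    ← sum_sub_mul_tripleCoeff, mul_sum, map_sum]
  refine sum_congr rfl fun i hi => ?_
  rw [mem_range] at hi
  rw [← coeff_eulerProd_mul_tripleCoeff (by omega) (by omega), ← coeff_C_mul, mul_left_comm]
  simp

end

lemma sum_range_sub_eq_sum_Icc {M : Type*} [AddCommMonoid M] (m : ℕ) (f : ℤ → M) :
    ∑ i ∈ range (2 * m + 1), f ((i : ℤ) - m) = ∑ k ∈ Icc (-m : ℤ) m, f k :=
  sum_nbij' (fun i => (i : ℤ) - m) (fun k => (k + m).toNat)
    (fun i hi => by rw [mem_range] at hi; rw [mem_Icc]; omega)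
    (fun k hk => by rw [mem_Icc] at hk; rw [mem_range]; omega)
    (fun i _ => by simp) (fun k hk => by rw [mem_Icc] at hk; omega)
    fun _ _ => rfl

lemma neg_one_pow_add_eq_pow_natAbs_sub {M : Type*} [Monoid M] [HasDistribNeg M] (m i : ℕ) :
    (-1 : M) ^ (m + i) = (-1) ^ ((i : ℤ) - m).natAbs := by
  rw [show m + i = ((i : ℤ) - m).natAbs + 2 * min m i by omega, pow_add, pow_mul, neg_one_sq,
    one_pow, mul_one]

lemma sum_triangular_eq_sum_mul_two_mul_add_one (N : ℕ) :
    ∑ k ∈ Icc (-(N + 1 : ℕ) : ℤ) (N + 1 : ℕ),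
        k * (if triangular k = N then (-1) ^ k.natAbs else 0)
      = ∑ n ∈ Icc (-(N : ℤ) - 1) ((N : ℤ) + 1),
          if n * (2 * n + 1) = (N : ℤ) then 4 * n + 1 else 0 := by
  by_cases hN : ∃ n : ℤ, n * (2 * n + 1) = N
  · obtain ⟨n, hn⟩ := hN
    have hterm (k : ℤ) : k * (if triangular k = N then (-1) ^ k.natAbs else 0)
        = (if k = 2 * n then 2 * n else 0) + (if k = -2 * n - 1 then 2 * n + 1 else 0) := by
      have hiff : triangular k = N ↔ k = 2 * n ∨ k = -2 * n - 1 := by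
        rw [← triangular_eq_mul_iff, hn, Nat.cast_inj]
      by_cases h₁ : k = 2 * n
      · have : Even k.natAbs := Int.natAbs_even.2 ⟨n, by omega⟩
        rw [if_pos (hiff.2 (Or.inl h₁)), if_pos h₁, if_neg (by omega), this.neg_one_pow, h₁]; ring
      by_cases h₂ : k = -2 * n - 1
      · have : Odd k.natAbs := Int.natAbs_odd.2 ⟨-n - 1, by omega⟩
        rw [if_pos (hiff.2 (Or.inr h₂)), if_neg h₁, if_pos h₂, this.neg_one_pow, h₂]; ring
      · rw [if_neg (by tauto), if_neg h₁, if_neg h₂]; ring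
    have hbound : -(N : ℤ) - 1 ≤ 2 * n ∧ 2 * n ≤ N := by constructor <;> nlinarith
    rw [sum_congr rfl fun k _ => hterm k, sum_add_distrib, sum_ite_eq', sum_ite_eq',
      if_pos (by simp; omega), if_pos (by simp; omega),
      sum_eq_single_of_mem n (by simp; omega) fun n' _ hn' => if_neg fun h =>
        hn' (mul_two_mul_add_one_injective (h.trans hn.symm)), if_pos hn]
    ring
  · rw [not_exists] at hN
    rw [sum_eq_zero, sum_eq_zero]
    · exact fun n _ => if_neg (hN n)
    · intro k _
      rw [if_neg, mul_zero]
      intro h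
      obtain ⟨n, hn⟩ := exists_mul_two_mul_add_one_eq_triangular k
      exact hN n (by rw [hn, h])

/-- Jacobi's identity for the cube of the Euler product, coefficient by coefficient in
`ℤ⟦q⟧`: the coefficient of `q^N` in `∏_{n≥1} (1-q^n)^3` (the product truncated at any
stage beyond `N`, which determines the coefficient) equals `4n+1` if `N = n(2n+1)` for
the (unique) integer `n`, and `0` otherwise. -/
theorem stmt_0 (N : ℕ) :
    (PowerSeries.coeff (R := ℤ) N)
        (∏ n ∈ Finset.Icc 1 (N + 1), (1 - (PowerSeries.X : PowerSeries ℤ) ^ n) ^ 3) =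
      ∑ n ∈ Finset.Icc (-(N : ℤ) - 1) ((N : ℤ) + 1),
        if n * (2 * n + 1) = (N : ℤ) then 4 * n + 1 else 0 := by
  have hprod : ∏ n ∈ Icc 1 (N + 1), (1 - (X : ℤ⟦X⟧) ^ n) ^ 3 = eulerProd X (N + 1) ^ 3 := by
    rw [prod_pow, ← Ico_add_one_right_eq_Icc, prod_Ico_eq_prod_range, Nat.add_sub_cancel,
      eulerProd]
    simp_rw [add_comm 1]
  rw [hprod, coeff_eulerProd_pow_three, ← sum_triangular_eq_sum_mul_two_mul_add_one,
    ← sum_range_sub_eq_sum_Icc]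
  refine sum_congr rfl fun i _ => ?_
  rw [neg_one_pow_add_eq_pow_natAbs_sub]
end

section
/- Any bounded holomorphic function $f$ on the upper half-plane that is invariant under the full modular group action $\tau \mapsto \frac{a\tau+b}{c\tau+d}$ for all $\begin{pmatrix}a&b\\c&d\end{pmatrix}\in SL_2(\mathbb{Z})$, and extends holomorphically to the cusp (i.e., $f(\tau) = g(e^{2\pi i \tau})$ with $g$ holomorphic at $0$), is constant. -/
/-!
A bounded, holomorphic, `SL₂(ℤ)`-invariant function on `ℍ` is a modular form of weight `0` and
level one: boundedness on all of `ℍ` gives boundedness at every cusp. Such a form is constant, by the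
maximum modulus principle for its `q`-expansion on the unit disc (`levelOne_weight_zero_const`).
-/

open UpperHalfPlane ModularForm OnePoint
open scoped MatrixGroups Manifold

lemma UpperHalfPlane.coe_SL2Z_smul (γ : SL(2, ℤ)) (τ : ℍ) :
    ((γ • τ : ℍ) : ℂ) = ((γ 0 0 : ℤ) * τ + (γ 0 1 : ℤ)) / ((γ 1 0 : ℤ) * τ + (γ 1 1 : ℤ)) := by
  simp [ModularGroup.sl_moeb, coe_smul, num, denom, σ]

lemma ModularForm.slash_zero_SL2Z_eq_self {F : ℍ → ℂ}
    (inv : ∀ (γ : SL(2, ℤ)) τ, F (γ • τ) = F τ) (γ : SL(2, ℤ)) : F ∣[(0 : ℤ)] γ = F := by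
  ext τ
  rw [SL_slash_apply, neg_zero, zpow_zero, mul_one, inv]

def ModularForm.ofBoundedSL2ZInvariant (F : ℍ → ℂ) (hol : MDiff F)
    (bdd : ∃ C, ∀ τ, ‖F τ‖ ≤ C) (inv : ∀ (γ : SL(2, ℤ)) τ, F (γ • τ) = F τ) :
    ModularForm 𝒮ℒ 0 where
  toFun := F
  slash_action_eq' := by
    rintro _ ⟨γ, rfl⟩
    exact slash_zero_SL2Z_eq_self inv γ
  holo' := hol
  bdd_at_cusps' hc := by
    obtain ⟨γ, hγ⟩ := isCusp_SL2Z_iff'.mp hc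
    obtain ⟨C, hC⟩ := bdd
    rw [isBoundedAt_iff_exists_SL2Z hc]
    refine ⟨γ, hγ.symm, ?_⟩
    rw [slash_zero_SL2Z_eq_self inv γ]
    exact isBoundedAtImInfty_iff.mpr ⟨C, 0, fun τ _ ↦ hC τ⟩

lemma UpperHalfPlane.exists_eq_const_of_bounded_of_SL2Z_invariant (F : ℍ → ℂ) (hol : MDiff F)
    (bdd : ∃ C, ∀ τ, ‖F τ‖ ≤ C) (inv : ∀ (γ : SL(2, ℤ)) τ, F (γ • τ) = F τ) :
    ∃ c, ∀ τ, F τ = c := by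
  obtain ⟨c, hc⟩ :=
    ModularFormClass.levelOne_weight_zero_const (ofBoundedSL2ZInvariant F hol bdd inv)
  exact ⟨c, congrFun hc⟩

theorem stmt_4_general (f : ℂ → ℂ)
    (hol : ∀ τ : ℂ, 0 < τ.im → DifferentiableAt ℂ f τ)
    (bdd : ∃ C : ℝ, ∀ τ : ℂ, 0 < τ.im → ‖f τ‖ ≤ C)
    (inv : ∀ A : Matrix.SpecialLinearGroup (Fin 2) ℤ, ∀ τ : ℂ, 0 < τ.im →
      f ((((A : Matrix (Fin 2) (Fin 2) ℤ) 0 0 : ℤ) * τ + ((A : Matrix (Fin 2) (Fin 2) ℤ) 0 1 : ℤ)) /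
        (((A : Matrix (Fin 2) (Fin 2) ℤ) 1 0 : ℤ) * τ + ((A : Matrix (Fin 2) (Fin 2) ℤ) 1 1 : ℤ))) = f τ) :
    ∃ c : ℂ, ∀ τ : ℂ, 0 < τ.im → f τ = c := by
  have hol' : MDiff (fun τ : ℍ ↦ f τ) := fun τ ↦
    (hol τ τ.im_pos).mdifferentiableAt.comp τ (mdifferentiable_coe τ)
  have bdd' : ∃ C, ∀ τ : ℍ, ‖f τ‖ ≤ C :=
    let ⟨C, hC⟩ := bdd
    ⟨C, fun τ ↦ hC τ τ.im_pos⟩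
  have inv' : ∀ (γ : SL(2, ℤ)) (τ : ℍ), f ↑(γ • τ) = f τ := fun γ τ ↦ by
    rw [coe_SL2Z_smul, inv γ τ τ.im_pos]
  obtain ⟨c, hc⟩ := exists_eq_const_of_bounded_of_SL2Z_invariant _ hol' bdd' inv'
  exact ⟨c, fun τ hτ ↦ hc ⟨τ, hτ⟩⟩

/-- A bounded holomorphic function on the upper half-plane, invariant under the full
modular group `SL₂(ℤ)` acting by Möbius transformations, which extends holomorphically
to the cusp (`f(τ) = g(e^{2πiτ})` with `g` holomorphic at `0`), is constant. -/
theorem stmt_4 (f g : ℂ → ℂ)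
    (hol : ∀ τ : ℂ, 0 < τ.im → DifferentiableAt ℂ f τ)
    (bdd : ∃ C : ℝ, ∀ τ : ℂ, 0 < τ.im → ‖f τ‖ ≤ C)
    (inv : ∀ A : Matrix.SpecialLinearGroup (Fin 2) ℤ, ∀ τ : ℂ, 0 < τ.im →
      f ((((A : Matrix (Fin 2) (Fin 2) ℤ) 0 0 : ℤ) * τ + ((A : Matrix (Fin 2) (Fin 2) ℤ) 0 1 : ℤ)) /
        (((A : Matrix (Fin 2) (Fin 2) ℤ) 1 0 : ℤ) * τ + ((A : Matrix (Fin 2) (Fin 2) ℤ) 1 1 : ℤ))) = f τ)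
    (hg : AnalyticAt ℂ g 0)
    (cusp : ∀ τ : ℂ, 0 < τ.im → f τ = g (Complex.exp (2 * Real.pi * Complex.I * τ))) :
    ∃ c : ℂ, ∀ τ : ℂ, 0 < τ.im → f τ = c :=
  stmt_4_general f hol bdd inv
end

section
/- Euler's pentagonal number theorem: $\prod_{n=1}^\infty (1-q^n) = \sum_{k \in \mathbb{Z}} (-1)^k q^{k(3k-1)/2}$ in $\mathbb{Z}[[q]]$. -/
/-!
Mathlib proves the pentagonal number theorem for the infinite product, in the form that the
coefficient of `X ^ N` in `∏ n ∈ s, (1 - X ^ (n + 1))` is eventually that of `pentagonalSeries`.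
The finite product in the statement already has the stable coefficient, since multiplying by
`1 - X ^ m` with `m > N` does not change the coefficient of `X ^ N`.
-/

open PowerSeries Finset Filter

theorem natAbs_le_pentagonal (k : ℤ) : k.natAbs ≤ pentagonal k := by
  have h := two_mul_natCast_pentagonal k
  zify
  rcases abs_cases k with ⟨hk, -⟩ | ⟨hk, -⟩ <;> nlinarith

theorem pentagonal_eq_iff {k : ℤ} {N : ℕ} : pentagonal k = N ↔ k * (3 * k - 1) = 2 * N := by
  rw [← two_mul_natCast_pentagonal]
  omega

namespace PowerSeries

variable {R : Type*} [CommRing R]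

theorem coeff_mul_one_sub_X_pow_of_lt {N m : ℕ} (h : N < m) (f : R⟦X⟧) :
    coeff N (f * (1 - X ^ m)) = coeff N f := by
  rw [mul_sub, mul_one, map_sub, coeff_mul_X_pow', if_neg (by omega), sub_zero]

theorem coeff_prod_range_one_sub_X_pow_of_le {N M : ℕ} (h : N + 1 ≤ M) :
    coeff N (∏ i ∈ range M, (1 - X ^ (i + 1) : R⟦X⟧)) =
      coeff N (∏ i ∈ range (N + 1), (1 - X ^ (i + 1) : R⟦X⟧)) := by
  induction M, h using Nat.le_induction with
  | base => rfl
  | succ M hM ih => rw [prod_range_succ, coeff_mul_one_sub_X_pow_of_lt (by omega), ih]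

variable (R) in
theorem coeff_prod_range_one_sub_X_pow (N : ℕ) :
    coeff N (∏ i ∈ range (N + 1), (1 - X ^ (i + 1) : R⟦X⟧)) = coeff N (pentagonalSeries R) := by
  obtain ⟨M, hM, hNM⟩ := ((tendsto_finset_range.eventually
    (coeff_prod_one_sub_X_pow_eventually_eq R N)).and (eventually_ge_atTop (N + 1))).exists
  rw [← coeff_prod_range_one_sub_X_pow_of_le hNM, hM]

theorem coeff_pentagonalSeries_eq_sum (N : ℕ) :
    coeff N (pentagonalSeries R) =
      ∑ k ∈ Icc (-(N : ℤ) - 1) (N + 1), if pentagonal k = N then (k.negOnePow : R) else 0 := by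
  by_cases hN : N ∈ Set.range pentagonal
  · obtain ⟨k₀, rfl⟩ := hN
    have hk₀ : k₀ ∈ Icc (-(pentagonal k₀ : ℤ) - 1) (pentagonal k₀ + 1) := by
      have := natAbs_le_pentagonal k₀
      rw [mem_Icc]
      omega
    rw [coeff_pentagonalSeries_pentagonal, sum_eq_single_of_mem k₀ hk₀, if_pos rfl]
    exact fun k _ hk => if_neg (pentagonal_injective.ne hk)
  · rw [coeff_pentagonalSeries_eq_zero R hN]
    exact (sum_eq_zero fun k _ => if_neg fun h => hN ⟨k, h⟩).symm

end PowerSeries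

/-- Euler's pentagonal number theorem in `ℤ⟦q⟧`, coefficient by coefficient:
the coefficient of `q^N` in `∏_{n≥1}(1-qⁿ)` is `(-1)^k` if `N = k(3k-1)/2` for a
(unique) integer `k`, and `0` otherwise. -/
theorem stmt_16 (N : ℕ) :
    (PowerSeries.coeff (R := ℤ) N)
        (∏ n ∈ Finset.Icc 1 (N + 1), (1 - (PowerSeries.X : PowerSeries ℤ) ^ n)) =
      ∑ k ∈ Finset.Icc (-(N : ℤ) - 1) ((N : ℤ) + 1),
        if k * (3 * k - 1) = 2 * (N : ℤ) then (-1 : ℤ) ^ k.natAbs else 0 := by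
  have hreindex : ∏ n ∈ Icc 1 (N + 1), (1 - X ^ n : ℤ⟦X⟧) =
      ∏ i ∈ range (N + 1), (1 - X ^ (i + 1)) := by
    rw [range_eq_Ico, prod_Ico_add' (fun n ↦ (1 - X ^ n : ℤ⟦X⟧))]
    rfl
  rw [hreindex, coeff_prod_range_one_sub_X_pow, coeff_pentagonalSeries_eq_sum]
  refine sum_congr rfl fun k _ => ?_
  simp only [pentagonal_eq_iff, Int.coe_negOnePow]
end
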